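/- arXiv:2512.15412 — 7 statements merged into one kernel-verified Lean document; each statement's English description precedes it below -/
import Mathlib

section
/- Let ρ be an n×n complex matrix with ρ² = ρ, let m ≥ 1, and let Λ₁, …, Λ_m be arbitrary n×n complex matrices. Then Σ_{k=1}^{m} C_ρ^k(Λ_k) = C_ρ(Σ_{k odd} Λ_k) + C_ρ²(Σ_{k even} Λ_k), where the first sum on the right ranges over odd k ≤ m and the second over even k ≤ m. Hence the most general multi-bracket expansion of a pure-state increment reduces to a single-bracket plus a double-bracket contribution. -/
open Matrix Finset

/-- For a pure state `ρ` (`ρ² = ρ`) and arbitrary generators `Λ₁, …, Λ_m`, the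
multi-bracket expansion `Σ_{k=1}^m C_ρ^k(Λ_k)` reduces to a single-bracket plus
a double-bracket contribution:
`Σ_k C_ρ^k(Λ_k) = C_ρ(Σ_{k odd} Λ_k) + C_ρ²(Σ_{k even} Λ_k)`. -/
theorem multi_bracket_reduction
    (n : ℕ) (ρ : Matrix (Fin n) (Fin n) ℂ) (hρ : ρ * ρ = ρ)
    (m : ℕ) (hm : 1 ≤ m) (Λ : ℕ → Matrix (Fin n) (Fin n) ℂ) :
    ∑ k ∈ Finset.Icc 1 m,
        (fun X : Matrix (Fin n) (Fin n) ℂ => ⁅X, ρ⁆)^[k] (Λ k)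
      = ⁅∑ k ∈ (Finset.Icc 1 m).filter (fun k => Odd k), Λ k, ρ⁆
        + ⁅⁅∑ k ∈ (Finset.Icc 1 m).filter (fun k => Even k), Λ k, ρ⁆, ρ⁆ := by
  set f : Matrix (Fin n) (Fin n) ℂ → Matrix (Fin n) (Fin n) ℂ := fun X => ⁅X, ρ⁆ with hf
  have hρ' : ∀ X : Matrix (Fin n) (Fin n) ℂ, ρ * (ρ * X) = ρ * X := by
    intro X; rw [← mul_assoc, hρ]
  have h3 : ∀ X, f (f (f X)) = f X := by
    intro X
    simp only [hf, Ring.lie_def, sub_mul, mul_sub, mul_assoc, hρ, hρ']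
    abel
  have h_odd : ∀ j X, f^[2 * j + 1] X = f X := by
    intro j
    induction j with
    | zero => intro X; simp
    | succ j ih =>
      intro X
      have : 2 * (j + 1) + 1 = (2 * j + 1) + 2 := by ring
      rw [this, Function.iterate_add_apply, ih]
      simpa using (h3 X).symm ▸ rfl
  have h_even : ∀ j X, f^[2 * j + 2] X = f (f X) := by
    intro j
    induction j with
    | zero => intro X; simp
    | succ j ih =>
      intro X
      have : 2 * (j + 1) + 2 = (2 * j + 2) + 2 := by ring
      rw [this, Function.iterate_add_apply, ih]
      simp only [Function.iterate_succ, Function.iterate_zero, Function.comp_apply, id_eq]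
      rw [h3]
  have hsum : ∀ (s : Finset ℕ) (g : ℕ → Matrix (Fin n) (Fin n) ℂ),
      f (∑ k ∈ s, g k) = ∑ k ∈ s, f (g k) := by
    intro s g
    simp [hf, Ring.lie_def, Finset.sum_mul, Finset.mul_sum, Finset.sum_sub_distrib]
  have hiter : ∀ k ∈ Finset.Icc 1 m, f^[k] (Λ k)
      = if Odd k then f (Λ k) else f (f (Λ k)) := by
    intro k hk
    simp only [Finset.mem_Icc] at hk
    by_cases hodd : Odd k
    · obtain ⟨j, hj⟩ := hodd
      have hodd' : Odd k := ⟨j, hj⟩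
      simp only [hodd', if_true]
      rw [show k = 2 * j + 1 by omega, h_odd j]
    · have heven : Even k := Nat.not_odd_iff_even.mp hodd
      obtain ⟨j, hj⟩ := heven
      have hjpos : 1 ≤ j := by omega
      simp only [hodd, if_false]
      rw [show k = 2 * (j - 1) + 2 by omega, h_even (j - 1)]
  rw [Finset.sum_congr rfl hiter]
  rw [← Finset.sum_filter_add_sum_filter_not (Finset.Icc 1 m) (fun k => Odd k)]
  have hfilt : (Finset.Icc 1 m).filter (fun k => ¬ Odd k)
      = (Finset.Icc 1 m).filter (fun k => Even k) := by
    apply Finset.filter_congr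
    intro k _
    simp [Nat.not_odd_iff_even]
  have e1 : ∑ k ∈ (Finset.Icc 1 m).filter (fun k => Odd k),
      (if Odd k then f (Λ k) else f (f (Λ k)))
      = ∑ k ∈ (Finset.Icc 1 m).filter (fun k => Odd k), f (Λ k) :=
    Finset.sum_congr rfl fun k hk => by simp [(Finset.mem_filter.mp hk).2]
  have e2 : ∑ k ∈ (Finset.Icc 1 m).filter (fun k => ¬ Odd k),
      (if Odd k then f (Λ k) else f (f (Λ k)))
      = ∑ k ∈ (Finset.Icc 1 m).filter (fun k => Even k), f (f (Λ k)) := by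
    rw [hfilt]
    refine Finset.sum_congr rfl fun k hk => ?_
    have : ¬ Odd k := Nat.not_odd_iff_even.mpr (Finset.mem_filter.mp hk).2
    simp [this]
  rw [e1, e2, ← hsum _ (fun k => f (Λ k)), ← hsum _ Λ, ← hsum _ Λ]
end

section
/- Let ψ ∈ ℂⁿ be a unit vector, ρ := ψψᴴ the associated rank-one projector, C an arbitrary n×n complex matrix, A := (C + Cᴴ)/2 its Hermitian part, B := (C − Cᴴ)/2 its anti-Hermitian part, and m := tr(Aρ) (a real number). Then (C − m·1)ρ + ρ(Cᴴ − m·1) = ⁅⁅A, ρ⁆ + B, ρ⁆; that is, the diffusion term {C − m, ρ}_c of the stochastic master equation equals a commutator with the state. -/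
/-!
Substitute `C = A + B` and `Cᴴ = A - B`. Since `ρ = ψψᴴ` is idempotent with scalar compressions,
`ρ A ρ = tr(Aρ) ρ = m ρ`, expanding the double commutator gives `Aρ + ρA - 2mρ + Bρ - ρB`,
which is the left-hand side.
-/

open Matrix

theorem Matrix.vecMulVec_mul_mul_vecMulVec {α l m n : Type*} [CommSemiring α] [Fintype m]
    (u : l → α) (v w : m → α) (x : n → α) (M : Matrix m m α) :
    vecMulVec u v * M * vecMulVec w x = (v ⬝ᵥ M *ᵥ w) • vecMulVec u x := by
  rw [Matrix.mul_assoc, mul_vecMulVec, vecMulVec_mul_vecMulVec, vecMulVec_smul]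

theorem Matrix.vecMulVec_mul_mul_vecMulVec_self {α n : Type*} [CommSemiring α] [Fintype n]
    (u v : n → α) (M : Matrix n n α) :
    vecMulVec u v * M * vecMulVec u v = (M * vecMulVec u v).trace • vecMulVec u v := by
  rw [vecMulVec_mul_mul_vecMulVec, mul_vecMulVec, trace_vecMulVec, dotProduct_comm]

theorem Matrix.isIdempotentElem_vecMulVec {α n : Type*} [CommSemiring α] [Fintype n]
    {u v : n → α} (h : v ⬝ᵥ u = 1) : IsIdempotentElem (vecMulVec u v) := by
  rw [IsIdempotentElem, vecMulVec_mul_vecMulVec, h, one_smul]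

theorem IsIdempotentElem.sub_smul_one_mul_add_mul_sub_smul_one
    {K R : Type*} [CommRing K] [Ring R] [Algebra K R] {ρ : R} (hρ : IsIdempotentElem ρ)
    {A : R} (B : R) {m : K} (hA : ρ * A * ρ = m • ρ) :
    (A + B - m • 1) * ρ + ρ * (A - B - m • 1) = ⁅⁅A, ρ⁆ + B, ρ⁆ := by
  have hAρ : A * ρ * ρ = A * ρ := by rw [mul_assoc, hρ.eq]
  have hρA : ρ * (ρ * A) = ρ * A := by rw [← mul_assoc, hρ.eq]
  simp only [Ring.lie_def, sub_mul, add_mul, mul_sub, mul_add, smul_mul_assoc, one_mul,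
    mul_smul_comm, mul_one, hAρ, hρA, ← mul_assoc, hA]
  abel

/-- For a pure state `ρ = ψψᴴ` with `ψ` a unit vector, an arbitrary jump
operator `C` with Hermitian part `A = (C + Cᴴ)/2` and anti-Hermitian part
`B = (C − Cᴴ)/2`, and `m = tr(Aρ)`, the diffusion term of the stochastic
master equation is a commutator with the state:
`(C − m·1)ρ + ρ(Cᴴ − m·1) = ⁅⁅A, ρ⁆ + B, ρ⁆`. -/
theorem diffusion_term_as_commutator
    (n : ℕ) (ψ : Fin n → ℂ) (hψ : star ψ ⬝ᵥ ψ = 1)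
    (C : Matrix (Fin n) (Fin n) ℂ) :
    let ρ : Matrix (Fin n) (Fin n) ℂ := vecMulVec ψ (star ψ)
    let A : Matrix (Fin n) (Fin n) ℂ := ((1 : ℂ) / 2) • (C + Cᴴ)
    let B : Matrix (Fin n) (Fin n) ℂ := ((1 : ℂ) / 2) • (C - Cᴴ)
    let m : ℂ := (A * ρ).trace
    (C - m • (1 : Matrix (Fin n) (Fin n) ℂ)) * ρ
        + ρ * (Cᴴ - m • (1 : Matrix (Fin n) (Fin n) ℂ))
      = ⁅⁅A, ρ⁆ + B, ρ⁆ := by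
  intro ρ A B m
  have hCH : Cᴴ = A - B := by simp only [A, B]; module
  have hC : C = A + B := by simp only [A, B]; module
  rw [hCH, hC]
  exact (isIdempotentElem_vecMulVec hψ).sub_smul_one_mul_add_mul_sub_smul_one B
    (vecMulVec_mul_mul_vecMulVec_self ψ (star ψ) A)
end

section
/- Let ρ be an n×n complex matrix with ρ² = ρ and ρᴴ = ρ, and let X be a Hermitian matrix (Xᴴ = X) satisfying X = ρX + Xρ. Then H := i⁅X, ρ⁆ is Hermitian and X = −i⁅H, ρ⁆. Hence every purity-preserving increment dρ of a pure state is generated by the Hamiltonian H = i[dρ, ρ] via a quantum Liouville equation dρ = −i[H, ρ]. -/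
open Matrix

/-- Every Hermitian purity-preserving increment `X` (i.e. `X = ρX + Xρ`) of a
pure state `ρ` (i.e. `ρ² = ρ`, `ρᴴ = ρ`) is generated by the Hamiltonian
`H = i⁅X, ρ⁆`, which is Hermitian, via the quantum Liouville equation
`X = −i⁅H, ρ⁆`. -/
theorem increment_generated_by_hamiltonian
    (n : ℕ) (ρ X : Matrix (Fin n) (Fin n) ℂ)
    (hρ : ρ * ρ = ρ) (hρH : ρᴴ = ρ) (hXH : Xᴴ = X)
    (hX : X = ρ * X + X * ρ) :
    let H : Matrix (Fin n) (Fin n) ℂ := Complex.I • ⁅X, ρ⁆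
    Hᴴ = H ∧ X = (-Complex.I) • ⁅H, ρ⁆ := by
  intro H
  have hρXρ : ρ * X * ρ = 0 := by
    have h : ρ * X * ρ = ρ * X * ρ + ρ * X * ρ := by
      calc ρ * X * ρ = ρ * (ρ * X + X * ρ) * ρ := by rw [← hX]
        _ = ρ * ρ * X * ρ + ρ * (X * ρ * ρ) := by noncomm_ring
        _ = ρ * X * ρ + ρ * X * ρ := by rw [hρ, mul_assoc X, hρ, ← mul_assoc]
    linear_combination (norm := noncomm_ring) -h
  constructor
  · show (Complex.I • ⁅X, ρ⁆)ᴴ = Complex.I • ⁅X, ρ⁆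
    simp only [Ring.lie_def, conjTranspose_smul, conjTranspose_sub,
      conjTranspose_mul, hρH, hXH, Complex.star_def, Complex.conj_I]
    module
  · show X = (-Complex.I) • ⁅Complex.I • ⁅X, ρ⁆, ρ⁆
    simp only [Ring.lie_def, smul_sub, sub_mul, mul_sub, smul_mul_assoc, mul_smul_comm, smul_smul]
    rw [show -Complex.I * Complex.I = 1 by simp [Complex.I_mul_I]]
    simp only [one_smul]
    have h3 : ρ * (X * ρ) = 0 := by rw [← mul_assoc]; exact hρXρ
    have h1 : X * ρ * ρ = X * ρ := by rw [mul_assoc, hρ]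
    have h2 : ρ * (ρ * X) = ρ * X := by rw [← mul_assoc, hρ]
    rw [h1, h2, h3, hρXρ, sub_zero, zero_sub, sub_neg_eq_add, add_comm]
    exact hX
end

section
/- Let A be a Hermitian n×n complex matrix, γ ≥ 0, and let ρ : ℝ → (n×n complex matrices) be differentiable with ρ(t) Hermitian for all t, satisfying the deterministic pure-measurement drift equation ρ'(t) = −γ·⁅⁅D(t), ρ(t)⁆, ρ(t)⁆, where D(t) := (A − tr(A ρ(t))·1)². Then the variance V(t) := tr(A² ρ(t)) − (tr(A ρ(t)))² is differentiable with V'(t) = −γ · tr((⁅D(t), ρ(t)⁆)ᴴ · ⁅D(t), ρ(t)⁆) ≤ 0; in particular V is nonincreasing, so the flow monotonically decreases the variance of the monitored observable A. -/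
open Matrix
open scoped ComplexOrder

attribute [local instance] Matrix.normedAddCommGroup Matrix.normedSpace

/-!
Differentiating, `V' = tr(A²ρ') − 2 tr(Aρ) tr(Aρ')`. The drift `ρ'` is a commutator, hence
traceless, so `V' = tr(D ρ')` with `D = (A − tr(Aρ))²`. Cyclicity of the trace turns
`tr(D ⁅⁅D, ρ⁆, ρ⁆)` into `−tr(⁅D, ρ⁆²)`, and `⁅D, ρ⁆` is skew-Hermitian because `D` and `ρ` are
Hermitian, so `V' = −γ tr(⁅D, ρ⁆ᴴ ⁅D, ρ⁆) = −γ ‖⁅D, ρ⁆‖²_F ≤ 0`.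
-/

namespace Matrix

variable {n R : Type*} [Fintype n]

section CommRing

variable [CommRing R]

theorem trace_mul_lie (X Y Z : Matrix n n R) : trace (X * ⁅Y, Z⁆) = trace (⁅Z, X⁆ * Y) := by
  rw [Ring.lie_def, Ring.lie_def, Matrix.mul_sub, Matrix.sub_mul, trace_sub, trace_sub,
    ← Matrix.mul_assoc, ← Matrix.mul_assoc, trace_mul_cycle X Y Z]

theorem trace_mul_lie_lie_self (X Y : Matrix n n R) :
    trace (X * ⁅⁅X, Y⁆, Y⁆) = -trace (⁅X, Y⁆ * ⁅X, Y⁆) := by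
  rw [trace_mul_lie, ← trace_neg, ← Matrix.neg_mul, Ring.lie_def Y X, Ring.lie_def X Y, neg_sub]

theorem trace_sub_smul_one_sq_mul [DecidableEq n] (A X : Matrix n n R) (c : R)
    (hX : trace X = 0) :
    trace ((A - c • 1) ^ 2 * X) = trace (A ^ 2 * X) - 2 * c * trace (A * X) := by
  have hsq : (A - c • 1) ^ 2 = A ^ 2 - (2 * c) • A + c ^ 2 • 1 := by
    simp only [sq, Matrix.sub_mul, Matrix.mul_sub, smul_mul_assoc, mul_smul_comm, Matrix.one_mul,
      Matrix.mul_one]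
    module
  rw [hsq, Matrix.add_mul, Matrix.sub_mul, smul_mul_assoc, smul_mul_assoc, Matrix.one_mul,
    trace_add, trace_sub, trace_smul, trace_smul, hX, smul_zero, add_zero, smul_eq_mul]

end CommRing

section StarRing

variable [CommRing R] [StarRing R]

theorem IsHermitian.conjTranspose_lie {X Y : Matrix n n R} (hX : X.IsHermitian)
    (hY : Y.IsHermitian) : ⁅X, Y⁆ᴴ = -⁅X, Y⁆ := by
  rw [Ring.lie_def, conjTranspose_sub, conjTranspose_mul, conjTranspose_mul, hX.eq, hY.eq,
    neg_sub]

theorem IsHermitian.isSelfAdjoint_trace_mul {X Y : Matrix n n R} (hX : X.IsHermitian)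
    (hY : Y.IsHermitian) : IsSelfAdjoint (trace (X * Y)) := by
  rw [IsSelfAdjoint, ← trace_conjTranspose, conjTranspose_mul, hX.eq, hY.eq, trace_mul_comm]

theorem IsHermitian.sub_smul_one_sq [DecidableEq n] {A : Matrix n n R} (hA : A.IsHermitian)
    {c : R} (hc : IsSelfAdjoint c) : ((A - c • 1) ^ 2).IsHermitian :=
  (hA.sub (isHermitian_one.smul hc)).pow 2

end StarRing

end Matrix

theorem HasDerivAt.trace_mul_left {𝕜 n : Type*} [RCLike 𝕜] [Fintype n]
    {ρ : ℝ → Matrix n n 𝕜} {ρ' : Matrix n n 𝕜} {t : ℝ} (C : Matrix n n 𝕜)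
    (h : HasDerivAt ρ ρ' t) : HasDerivAt (fun t => (C * ρ t).trace) (C * ρ').trace t :=
  let L : Matrix n n 𝕜 →ₗ[ℝ] 𝕜 :=
    ((traceLinearMap n 𝕜 𝕜).comp (LinearMap.mulLeft 𝕜 C)).restrictScalars ℝ
  (LinearMap.toContinuousLinearMap L).hasFDerivAt.comp_hasDerivAt t h

/-- Along the deterministic pure-measurement drift
`ρ'(t) = −γ ⁅⁅D(t), ρ(t)⁆, ρ(t)⁆` with `D(t) = (A − tr(Aρ(t))·1)²`, the
variance `V(t) = tr(A²ρ(t)) − tr(Aρ(t))²` of the Hermitian observable `A` has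
derivative `V'(t) = −γ tr((⁅D(t), ρ(t)⁆)ᴴ ⁅D(t), ρ(t)⁆) ≤ 0`; in particular
`V` is nonincreasing. -/
theorem variance_nonincreasing
    (n : ℕ) (A : Matrix (Fin n) (Fin n) ℂ) (hA : Aᴴ = A)
    (γ : ℝ) (hγ : 0 ≤ γ)
    (ρ : ℝ → Matrix (Fin n) (Fin n) ℂ)
    (hherm : ∀ t, (ρ t)ᴴ = ρ t)
    (D : ℝ → Matrix (Fin n) (Fin n) ℂ)
    (hD : ∀ t, D t = (A - (A * ρ t).trace • (1 : Matrix (Fin n) (Fin n) ℂ)) ^ 2)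
    (hρ' : ∀ t, HasDerivAt ρ (-(γ : ℂ) • ⁅⁅D t, ρ t⁆, ρ t⁆) t)
    (V : ℝ → ℂ)
    (hV : ∀ t, V t = (A ^ 2 * ρ t).trace - ((A * ρ t).trace) ^ 2) :
    (∀ t, HasDerivAt V (-(γ : ℂ) * ((⁅D t, ρ t⁆)ᴴ * ⁅D t, ρ t⁆).trace) t) ∧
    (∀ t, -(γ : ℂ) * ((⁅D t, ρ t⁆)ᴴ * ⁅D t, ρ t⁆).trace ≤ 0) ∧
    (∀ s t : ℝ, s ≤ t → (V t).re ≤ (V s).re) := by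
  have hskew (t : ℝ) : (⁅D t, ρ t⁆)ᴴ = -⁅D t, ρ t⁆ := by
    refine IsHermitian.conjTranspose_lie ?_ (hherm t)
    rw [hD]
    exact IsHermitian.sub_smul_one_sq hA (IsHermitian.isSelfAdjoint_trace_mul hA (hherm t))
  have hdrift (t : ℝ) : ((⁅D t, ρ t⁆)ᴴ * ⁅D t, ρ t⁆).trace
      = (A ^ 2 * ⁅⁅D t, ρ t⁆, ρ t⁆).trace
        - 2 * (A * ρ t).trace * (A * ⁅⁅D t, ρ t⁆, ρ t⁆).trace := by
    rw [hskew, Matrix.neg_mul, trace_neg, ← trace_mul_lie_lie_self, hD t,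
      trace_sub_smul_one_sq_mul _ _ _ (LieAlgebra.matrix_trace_commutator_zero _ _ _ _), ← hD t]
  have hderiv (t : ℝ) : HasDerivAt V (-(γ : ℂ) * ((⁅D t, ρ t⁆)ᴴ * ⁅D t, ρ t⁆).trace) t := by
    have h := ((hρ' t).trace_mul_left (A ^ 2)).fun_sub (((hρ' t).trace_mul_left A).fun_pow 2)
    rw [show V = _ from funext hV]
    refine h.congr_deriv ?_
    rw [hdrift]
    simp only [Matrix.mul_smul, trace_smul, smul_eq_mul]
    push_cast
    ring
  have hnonpos (t : ℝ) : -(γ : ℂ) * ((⁅D t, ρ t⁆)ᴴ * ⁅D t, ρ t⁆).trace ≤ 0 :=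
    mul_nonpos_of_nonpos_of_nonneg (by simpa using hγ)
      (posSemidef_conjTranspose_mul_self _).trace_nonneg
  refine ⟨hderiv, hnonpos, fun s t hst => ?_⟩
  exact antitone_of_hasDerivAt_nonpos
    (fun t => Complex.reCLM.hasFDerivAt.comp_hasDerivAt t (hderiv t))
    (fun t => (Complex.le_def.1 (hnonpos t)).1) hst
end

section
/- Let H₀ be a Hermitian n×n complex matrix, Π a Hermitian matrix with H₀Π = E·Π and ΠH₀ = E·Π for a real number E (an eigenprojector of H₀ with eigenvalue E), and γ ≥ 0. Let ψ : ℝ → ℂⁿ be differentiable with ‖ψ(t)‖ = 1 for all t, set ρ(t) := ψ(t)ψ(t)ᴴ, and suppose ρ satisfies the feedback-induced double-bracket equation ρ'(t) = −i⁅H₀, ρ(t)⁆ − γ·⁅⁅H₀², ρ(t)⁆, ρ(t)⁆. Then the population tr(Π ρ(t)) satisfies d/dt tr(Π ρ(t)) = −2γ · tr(Π ρ(t)) · (E² − tr(H₀² ρ(t))). -/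
/-!
Differentiating `tr(Pρ)` along the flow, the Hamiltonian term drops out because `P` commutes
with `H₀`. For the double bracket, idempotency of the pure state `ρ` gives
`⁅⁅A, ρ⁆, ρ⁆ = Aρ + ρA − 2ρAρ`, and `ρAρ = tr(Aρ) ρ` for a rank-one projector; since
`PA = AP = E²P` for `A = H₀²`, the trace against `P` collapses to `2 (E² − tr(Aρ)) tr(Pρ)`.
-/

open Matrix

attribute [local instance] Matrix.normedAddCommGroup Matrix.normedSpace

theorem lie_lie_of_isIdempotentElem {R : Type*} [NonUnitalRing R] {r : R}
    (hr : IsIdempotentElem r) (A : R) : ⁅⁅A, r⁆, r⁆ = A * r + r * A - 2 • (r * A * r) := by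
  rw [Ring.lie_def, Ring.lie_def, sub_mul, mul_sub, mul_assoc A, hr.eq, ← mul_assoc r r, hr.eq,
    ← mul_assoc r A r, two_nsmul]
  abel

namespace Matrix

variable {ι R : Type*} [Fintype ι]

theorem isIdempotentElem_vecMulVec_s14 [CommSemiring R] {u v : ι → R} (h : v ⬝ᵥ u = 1) :
    IsIdempotentElem (vecMulVec u v) := by
  rw [IsIdempotentElem, vecMulVec_mul_vecMulVec, h, one_smul]

theorem vecMulVec_mul_mul_vecMulVec_s14 [CommSemiring R] (u v : ι → R) (M : Matrix ι ι R) :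
    vecMulVec u v * M * vecMulVec u v = (M * vecMulVec u v).trace • vecMulVec u v := by
  rw [vecMulVec_mul, vecMulVec_mul_vecMulVec, mul_vecMulVec, trace_vecMulVec,
    ← dotProduct_mulVec, dotProduct_comm v, vecMulVec_smul]

theorem trace_mul_lie_eq_zero_of_commute [CommRing R] {P H : Matrix ι ι R} (h : Commute P H)
    (X : Matrix ι ι R) : (P * ⁅H, X⁆).trace = 0 := by
  rw [Ring.lie_def, mul_sub, trace_sub, ← mul_assoc, ← mul_assoc, trace_mul_comm (P * X),
    ← mul_assoc, h.eq, sub_self]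

theorem trace_mul_lie_lie_of_mul_eq_smul [CommRing R] {P A r : Matrix ι ι R} {e c : R}
    (hPA : P * A = e • P) (hAP : A * P = e • P) (hr : IsIdempotentElem r)
    (hrAr : r * A * r = c • r) : (P * ⁅⁅A, r⁆, r⁆).trace = 2 * (e - c) * (P * r).trace := by
  rw [lie_lie_of_isIdempotentElem hr, hrAr, mul_sub, mul_add, trace_sub, trace_add,
    ← mul_assoc, hPA, trace_mul_comm P (r * A), mul_assoc r, hAP]
  simp only [Matrix.mul_smul, smul_mul, trace_smul, trace_mul_comm r P, smul_eq_mul, nsmul_eq_mul,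
    Nat.cast_ofNat]
  ring

theorem _root_.HasDerivAt.trace_mul_left_s14 {𝕜 : Type*} [RCLike 𝕜] {f : ℝ → Matrix ι ι 𝕜}
    {f' : Matrix ι ι 𝕜} {t : ℝ} (hf : HasDerivAt f f' t) (P : Matrix ι ι 𝕜) :
    HasDerivAt (fun s => (P * f s).trace) (P * f').trace t :=
  (((traceLinearMap ι 𝕜 𝕜).comp (LinearMap.mulLeft 𝕜 P)).restrictScalars ℝ
    |>.toContinuousLinearMap).hasFDerivAt.comp_hasDerivAt t hf

end Matrix

theorem eigenprojector_population_evolution_general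
    (n : ℕ) (H₀ P : Matrix (Fin n) (Fin n) ℂ)
    (E : ℝ)
    (hPE : H₀ * P = (E : ℂ) • P) (hEP : P * H₀ = (E : ℂ) • P)
    (γ : ℝ)
    (ψ : ℝ → Fin n → ℂ)
    (hunit : ∀ t, star (ψ t) ⬝ᵥ ψ t = 1)
    (ρ : ℝ → Matrix (Fin n) (Fin n) ℂ)
    (hρ : ∀ t, ρ t = vecMulVec (ψ t) (star (ψ t)))
    (hρ' : ∀ t, HasDerivAt ρ
      ((-Complex.I) • ⁅H₀, ρ t⁆ - (γ : ℂ) • ⁅⁅H₀ ^ 2, ρ t⁆, ρ t⁆) t) :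
    ∀ t, HasDerivAt (fun s => (P * ρ s).trace)
      (-2 * (γ : ℂ) * (P * ρ t).trace * ((E : ℂ) ^ 2 - (H₀ ^ 2 * ρ t).trace)) t := by
  intro t
  have hcomm : Commute P H₀ := hEP.trans hPE.symm
  have hPA : P * H₀ ^ 2 = ((E : ℂ) ^ 2) • P := by
    rw [sq, ← mul_assoc, hEP, smul_mul_assoc, hEP, smul_smul, sq]
  have hAP : H₀ ^ 2 * P = ((E : ℂ) ^ 2) • P := by
    rw [← (hcomm.pow_right 2).eq, hPA]
  have hidem : IsIdempotentElem (ρ t) := hρ t ▸ isIdempotentElem_vecMulVec_s14 (hunit t)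
  have hsand : ρ t * H₀ ^ 2 * ρ t = (H₀ ^ 2 * ρ t).trace • ρ t :=
    hρ t ▸ vecMulVec_mul_mul_vecMulVec_s14 _ _ _
  refine ((hρ' t).trace_mul_left_s14 P).congr_deriv ?_
  rw [mul_sub, Matrix.mul_smul, Matrix.mul_smul, trace_sub, trace_smul, trace_smul,
    trace_mul_lie_eq_zero_of_commute hcomm, trace_mul_lie_lie_of_mul_eq_smul hPA hAP hidem hsand,
    smul_eq_mul, smul_eq_mul]
  ring

/-- Along the feedback-induced double-bracket flow
`ρ'(t) = −i⁅H₀, ρ(t)⁆ − γ⁅⁅H₀², ρ(t)⁆, ρ(t)⁆` of a pure state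
`ρ(t) = ψ(t)ψ(t)ᴴ`, the population of an eigenprojector `P` of `H₀` with
eigenvalue `E` satisfies
`d/dt tr(Pρ(t)) = −2γ tr(Pρ(t)) (E² − tr(H₀²ρ(t)))`. -/
theorem eigenprojector_population_evolution
    (n : ℕ) (H₀ P : Matrix (Fin n) (Fin n) ℂ)
    (hH : H₀ᴴ = H₀) (hP : Pᴴ = P) (E : ℝ)
    (hPE : H₀ * P = (E : ℂ) • P) (hEP : P * H₀ = (E : ℂ) • P)
    (γ : ℝ) (hγ : 0 ≤ γ)
    (ψ : ℝ → Fin n → ℂ) (hψ : Differentiable ℝ ψ)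
    (hunit : ∀ t, star (ψ t) ⬝ᵥ ψ t = 1)
    (ρ : ℝ → Matrix (Fin n) (Fin n) ℂ)
    (hρ : ∀ t, ρ t = vecMulVec (ψ t) (star (ψ t)))
    (hρ' : ∀ t, HasDerivAt ρ
      ((-Complex.I) • ⁅H₀, ρ t⁆ - (γ : ℂ) • ⁅⁅H₀ ^ 2, ρ t⁆, ρ t⁆) t) :
    ∀ t, HasDerivAt (fun s => (P * ρ s).trace)
      (-2 * (γ : ℂ) * (P * ρ t).trace * ((E : ℂ) ^ 2 - (H₀ ^ 2 * ρ t).trace)) t :=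
  eigenprojector_population_evolution_general n H₀ P E hPE hEP γ ψ hunit ρ hρ hρ'
end

section
/- Let ψ ∈ ℂⁿ be a unit vector, P := ψψᴴ, and N a Hermitian n×n complex matrix. Then ⁅⁅N, P⁆, P⁆ = 0 if and only if Nψ = ⟨ψ, Nψ⟩·ψ. That is, the stationary points of the pure-measurement double-bracket flow dρ = [[N, ρ], ρ] among pure states are exactly the eigenstates of the monitored observable N. -/
/-!
Since `P ψ = ψ`, applying the double bracket to `ψ` leaves `(1 - P) N ψ = N ψ - ⟨ψ, N ψ⟩ ψ`,
the component of `N ψ` orthogonal to `ψ`. Conversely, if `N ψ = c ψ` then `N P = c P` and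
`P N = c̄ P`, and `c = ⟨ψ, N ψ⟩` is real because `N` is Hermitian, so already `⁅N, P⁆ = 0`.
-/

open Matrix

namespace Matrix

variable {ι R : Type*} [Fintype ι] [CommRing R] [StarRing R]

theorem vecMulVec_star_mulVec (ψ v : ι → R) :
    vecMulVec ψ (star ψ) *ᵥ v = (star ψ ⬝ᵥ v) • ψ := by
  rw [vecMulVec_mulVec, op_smul_eq_smul]

theorem lie_lie_vecMulVec_star_mulVec_self (N : Matrix ι ι R) {ψ : ι → R}
    (hψ : star ψ ⬝ᵥ ψ = 1) :
    ⁅⁅N, vecMulVec ψ (star ψ)⁆, vecMulVec ψ (star ψ)⁆ *ᵥ ψ =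
      N *ᵥ ψ - (star ψ ⬝ᵥ N *ᵥ ψ) • ψ := by
  simp only [Ring.lie_def, sub_mulVec, ← mulVec_mulVec, vecMulVec_star_mulVec, hψ, one_smul,
    mulVec_sub, mulVec_smul]
  abel

theorem IsHermitian.isSelfAdjoint_star_dotProduct_mulVec_self {N : Matrix ι ι R}
    (hN : N.IsHermitian) (ψ : ι → R) : IsSelfAdjoint (star ψ ⬝ᵥ N *ᵥ ψ) := by
  rw [IsSelfAdjoint, ← star_dotProduct, star_mulVec, hN.eq, ← dotProduct_mulVec]

theorem lie_vecMulVec_star_eq_zero {N : Matrix ι ι R} (hN : N.IsHermitian) {ψ : ι → R}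
    (h : N *ᵥ ψ = (star ψ ⬝ᵥ N *ᵥ ψ) • ψ) :
    ⁅N, vecMulVec ψ (star ψ)⁆ = 0 := by
  have hPN : vecMulVec ψ (star ψ) * N = vecMulVec ψ (star (N *ᵥ ψ)) := by
    rw [vecMulVec_mul, star_mulVec, hN.eq]
  rw [Ring.lie_def, sub_eq_zero, mul_vecMulVec, hPN, h, star_smul,
    (hN.isSelfAdjoint_star_dotProduct_mulVec_self ψ).star_eq, vecMulVec_smul, smul_vecMulVec]

end Matrix

/-- For a pure state `P = ψψᴴ` (`ψ` a unit vector) and Hermitian observable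
`N`, the double bracket `⁅⁅N, P⁆, P⁆` vanishes if and only if `ψ` is an
eigenvector of `N`: `Nψ = ⟨ψ, Nψ⟩ψ`. Thus the pure stationary points of the
pure-measurement double-bracket flow are exactly the eigenstates of `N`. -/
theorem double_bracket_vanishes_iff_eigenstate
    (n : ℕ) (ψ : Fin n → ℂ) (hψ : star ψ ⬝ᵥ ψ = 1)
    (N : Matrix (Fin n) (Fin n) ℂ) (hN : Nᴴ = N) :
    let P : Matrix (Fin n) (Fin n) ℂ := vecMulVec ψ (star ψ)
    ⁅⁅N, P⁆, P⁆ = 0 ↔ N *ᵥ ψ = (star ψ ⬝ᵥ (N *ᵥ ψ)) • ψ := by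
  intro P
  refine ⟨fun h => ?_, fun h => ?_⟩
  · rw [← sub_eq_zero, ← lie_lie_vecMulVec_star_mulVec_self N hψ, h, zero_mulVec]
  · rw [lie_vecMulVec_star_eq_zero hN h, Ring.lie_def, zero_mul, mul_zero, sub_self]
end

section
/- Let ψ, q ∈ ℂⁿ be unit vectors, ρ := ψψᴴ, Q := qqᴴ, and let Z be an arbitrary n×n complex matrix. Then tr( ⁅⁅Z, ρ − Q⁆, ρ⁆ · Q ) = 2·tr((ZQ + QZ)ρ) − 2·(tr(Zρ) + tr(ZQ))·tr(Qρ). That is, the instantaneous change of the target overlap Q_∥ = tr(Qρ) under the state-agnostic feedback generator [[Z, ρ − Q], ρ] equals 2⟨{Z, Q}⟩_ρ − 2(⟨Z⟩_ρ + ⟨Z⟩_q)·Q_∥. -/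
/-!
For a trace-one idempotent `P` of rank one, `P X P = tr(XP) P` for every `X`. Expanding
`⁅⁅Z, ρ - Q⁆, ρ⁆ Q` and using this for `ρ` and for `Q`, every monomial in which `ρ` or `Q` occurs
twice collapses to a product of two traces; after cyclic permutations under the trace only the
terms `tr(ZQρ)`, `tr(QZρ)`, `tr(Zρ) tr(Qρ)` and `tr(ZQ) tr(Qρ)` remain.
-/

open Matrix

theorem IsIdempotentElem.lie_lie_self {A : Type*} [Ring A] {P : A} (hP : IsIdempotentElem P)
    (Z : A) : ⁅⁅Z, P⁆, P⁆ = Z * P + P * Z - 2 • (P * Z * P) := by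
  calc ⁅⁅Z, P⁆, P⁆ = Z * (P * P) + P * P * Z - 2 • (P * Z * P) := by
        simp only [Ring.lie_def]; noncomm_ring
    _ = _ := by rw [hP.eq]

namespace Matrix

variable {m R : Type*} [Fintype m] [CommRing R]

/-- Over a field these are exactly the idempotents of rank one. -/
structure IsRankOneIdempotent (P : Matrix m m R) : Prop where
  trace_eq_one : P.trace = 1
  mul_mul_self : ∀ X, P * X * P = (X * P).trace • P

theorem isRankOneIdempotent_vecMulVec {a b : m → R} (h : b ⬝ᵥ a = 1) :
    IsRankOneIdempotent (vecMulVec a b) where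
  trace_eq_one := by rw [trace_vecMulVec, dotProduct_comm, h]
  mul_mul_self X := by
    rw [vecMulVec_mul, vecMulVec_mul_vecMulVec, mul_vecMulVec, trace_vecMulVec,
      dotProduct_comm (X *ᵥ a), dotProduct_mulVec, dotProduct_comm _ a, vecMulVec_smul]

namespace IsRankOneIdempotent

variable {P : Matrix m m R} (hP : IsRankOneIdempotent P)
include hP

theorem trace_mul_mul_self_mul (X Y : Matrix m m R) :
    (P * X * P * Y).trace = (X * P).trace * (P * Y).trace := by
  rw [hP.mul_mul_self, smul_mul, trace_smul, smul_eq_mul]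

variable [DecidableEq m]

theorem isIdempotentElem : IsIdempotentElem P := by
  simpa [IsIdempotentElem, hP.trace_eq_one] using hP.mul_mul_self 1

theorem trace_lie_lie_self_mul (Z Y : Matrix m m R) :
    (⁅⁅Z, P⁆, P⁆ * Y).trace =
      (Z * P * Y).trace + (P * Z * Y).trace - 2 * ((Z * P).trace * (P * Y).trace) := by
  rw [hP.isIdempotentElem.lie_lie_self, sub_mul, add_mul, trace_sub, trace_add, smul_mul_assoc,
    trace_smul, hP.trace_mul_mul_self_mul, nsmul_eq_mul, Nat.cast_ofNat]

theorem trace_lie_lie_mul_self (Z X : Matrix m m R) :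
    (⁅⁅Z, P⁆, X⁆ * P).trace =
      2 * ((Z * P).trace * (X * P).trace) - (Z * X * P).trace - (X * Z * P).trace := by
  have hZPXP : (Z * P * X * P).trace = (Z * P).trace * (X * P).trace := by
    rw [Matrix.mul_assoc, Matrix.mul_assoc, ← Matrix.mul_assoc P, hP.mul_mul_self,
      Matrix.mul_smul, trace_smul, smul_eq_mul, mul_comm]
  have hXPZP : (X * P * Z * P).trace = (Z * P).trace * (X * P).trace := by
    rw [Matrix.mul_assoc, Matrix.mul_assoc, ← Matrix.mul_assoc P, hP.mul_mul_self,
      Matrix.mul_smul, trace_smul, smul_eq_mul]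
  have hPZXP : (P * Z * X * P).trace = (Z * X * P).trace := by
    rw [trace_mul_comm, ← Matrix.mul_assoc, ← Matrix.mul_assoc, hP.isIdempotentElem.eq, Matrix.mul_assoc,
      trace_mul_comm]
  have hXZPP : (X * Z * P * P).trace = (X * Z * P).trace := by
    rw [Matrix.mul_assoc _ P, hP.isIdempotentElem.eq]
  calc (⁅⁅Z, P⁆, X⁆ * P).trace
      = (Z * P * X * P).trace - (P * Z * X * P).trace - (X * Z * P * P).trace
        + (X * P * Z * P).trace := by
        simp only [Ring.lie_def, sub_mul, mul_sub, trace_sub, Matrix.mul_assoc]; ring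
    _ = _ := by rw [hZPXP, hXPZP, hPZXP, hXZPP]; ring

end IsRankOneIdempotent

theorem trace_lie_lie_sub_mul [DecidableEq m] {ρ Q : Matrix m m R}
    (hρ : IsRankOneIdempotent ρ) (hQ : IsRankOneIdempotent Q) (Z : Matrix m m R) :
    (⁅⁅Z, ρ - Q⁆, ρ⁆ * Q).trace =
      2 * ((Z * Q + Q * Z) * ρ).trace - 2 * ((Z * ρ).trace + (Z * Q).trace) * (Q * ρ).trace := by
  have hsplit : ⁅⁅Z, ρ - Q⁆, ρ⁆ = ⁅⁅Z, ρ⁆, ρ⁆ - ⁅⁅Z, Q⁆, ρ⁆ := by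
    simp only [Ring.lie_def]; noncomm_ring
  rw [hsplit, sub_mul, trace_sub, hρ.trace_lie_lie_self_mul, hQ.trace_lie_lie_mul_self,
    add_mul, trace_add, trace_mul_cycle Z Q ρ, ← trace_mul_cycle Z ρ Q, trace_mul_comm Q ρ]
  ring

end Matrix

/-- For pure states `ρ = ψψᴴ` and `Q = qqᴴ` (with `ψ`, `q` unit vectors) and any
operator `Z`, the instantaneous change of the target overlap `tr(Qρ)` under the
state-agnostic feedback generator `[[Z, ρ − Q], ρ]` is
`tr(⁅⁅Z, ρ − Q⁆, ρ⁆ Q) = 2 tr((ZQ + QZ)ρ) − 2 (tr(Zρ) + tr(ZQ)) tr(Qρ)`. -/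
theorem overlap_evolution_state_agnostic_feedback
    (n : ℕ) (ψ q : Fin n → ℂ)
    (hψ : star ψ ⬝ᵥ ψ = 1) (hq : star q ⬝ᵥ q = 1)
    (Z : Matrix (Fin n) (Fin n) ℂ) :
    let ρ : Matrix (Fin n) (Fin n) ℂ := vecMulVec ψ (star ψ)
    let Q : Matrix (Fin n) (Fin n) ℂ := vecMulVec q (star q)
    (⁅⁅Z, ρ - Q⁆, ρ⁆ * Q).trace
      = 2 * ((Z * Q + Q * Z) * ρ).trace
        - 2 * ((Z * ρ).trace + (Z * Q).trace) * (Q * ρ).trace :=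
  trace_lie_lie_sub_mul (isRankOneIdempotent_vecMulVec hψ) (isRankOneIdempotent_vecMulVec hq) Z
end
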